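/- Randomized appreciation rate (Corollary 1): let a be a random variable independent of the Brownian driver Z, with P(a ≠ r) > 0, and let the portfolio satisfy the proportion μ_c/μ_p = (1 − Φ(d_p))/Φ(d_c). Then E[X_T] > e^{rT}·X₀, where X_T = μ_p(K_p − S_T)⁺ + μ_c(S_T − K_c)⁺ with S_T = S₀·exp(aT − σ²T/2 + σ√T·Z). -/

import Mathlib

open MeasureTheory ProbabilityTheory Real Set

/-- Standard normal CDF. -/
noncomputable def Phi (x : ℝ) : ℝ :=
  ∫ y in Set.Iic x, (Real.sqrt (2 * Real.pi))⁻¹ * Real.exp (-(y ^ 2) / 2)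

/-- Standard normal density. -/
noncomputable def phi (y : ℝ) : ℝ := (Real.sqrt (2 * Real.pi))⁻¹ * Real.exp (-(y ^ 2) / 2)

/-- Black-Scholes d value. -/
noncomputable def dBS (S₀ K r T σ : ℝ) : ℝ :=
  (Real.log (S₀ / K) + T * (r + σ ^ 2 / 2)) / (σ * Real.sqrt T)

/-- Black-Scholes call price (closed form). -/
noncomputable def callBS (S₀ K r T σ : ℝ) : ℝ :=
  S₀ * Phi (dBS S₀ K r T σ) - K * Real.exp (-(r * T)) * Phi (dBS S₀ K r T σ - σ * Real.sqrt T)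

/-- Black-Scholes put price (via put-call parity). -/
noncomputable def putBS (S₀ K r T σ : ℝ) : ℝ :=
  callBS S₀ K r T σ - S₀ + K * Real.exp (-(r * T))

/-! Conditionally on `a = α`, the terminal value is the put–call payoff under a log-normal law
with drift `α`, so by the Black–Scholes computation its conditional mean is the forward value
`h α = e^{αT} (μ_p p_BS(α) + μ_c c_BS(α))` of the portfolio at rate `α`; by independence,
`E[X_T] = E[h(a)]`. The `φ`-terms cancel when differentiating in `α` (the identity behind the
Black–Scholes delta), leaving `h' α = T S₀ e^{αT} (μ_c Φ(d_c(α)) - μ_p (1 - Φ(d_p(α))))`. The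
bracket is strictly increasing in `α` and vanishes at `α = r` by the ratio condition, so `r` is a
strict global minimum of `h`, and `P(a ≠ r) > 0` makes `E[h(a)] > h(r) = e^{rT} X₀`. -/

lemma phi_eq_gaussianPDFReal : phi = gaussianPDFReal 0 1 := by
  ext x
  simp [phi, gaussianPDFReal]

lemma phi_pos (x : ℝ) : 0 < phi x :=
  phi_eq_gaussianPDFReal ▸ gaussianPDFReal_pos 0 1 x one_ne_zero

lemma continuous_phi : Continuous phi := by
  unfold phi
  fun_prop

lemma integrable_phi : Integrable phi :=
  phi_eq_gaussianPDFReal ▸ integrable_gaussianPDFReal 0 1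

lemma integral_phi : ∫ x, phi x = 1 :=
  phi_eq_gaussianPDFReal ▸ integral_gaussianPDFReal_eq_one 0 one_ne_zero

lemma phi_neg (x : ℝ) : phi (-x) = phi x := by
  simp [phi]

lemma integral_gaussianReal_eq_integral_phi_mul (f : ℝ → ℝ) :
    ∫ x, f x ∂gaussianReal 0 1 = ∫ x, phi x * f x := by
  rw [integral_gaussianReal_eq_integral_smul one_ne_zero, phi_eq_gaussianPDFReal]
  rfl

lemma setIntegral_Ioi_comp_sub (f : ℝ → ℝ) (c s : ℝ) :
    ∫ z in Ioi c, f (z - s) = ∫ z in Ioi (c - s), f z := by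
  rw [← (measurePreserving_sub_right volume s).setIntegral_preimage_emb
    (measurableEmbedding_subRight s) f, preimage_sub_const_Ioi, sub_add_cancel]

lemma integral_Ioi_phi (c : ℝ) : ∫ z in Ioi c, phi z = Phi (-c) := by
  rw [Phi, ← neg_neg c, ← integral_comp_neg_Iic, neg_neg]
  simp_rw [phi_neg]
  rfl

lemma hasDerivAt_Phi (x : ℝ) : HasDerivAt Phi (phi x) x := by
  have hPhi : (fun y => Phi 0 + ∫ t in (0 : ℝ)..y, phi t) = Phi := by
    ext y
    rw [← intervalIntegral.integral_Iic_sub_Iic integrable_phi.integrableOn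
      integrable_phi.integrableOn]
    exact add_sub_cancel _ _
  exact hPhi ▸ ((continuous_phi.integral_hasStrictDerivAt 0 x).hasDerivAt.const_add _)

lemma strictMono_Phi : StrictMono Phi :=
  strictMono_of_hasDerivAt_pos hasDerivAt_Phi phi_pos

lemma Phi_pos (x : ℝ) : 0 < Phi x := by
  change 0 < ∫ y in Iic x, phi y
  rw [integral_pos_iff_support_of_nonneg (fun y => (phi_pos y).le) integrable_phi.integrableOn]
  have hsupp : Function.support phi = univ := by
    ext y
    simp [(phi_pos y).ne']
  simp [hsupp]

lemma exp_mul_mul_phi (s z : ℝ) : exp (s * z) * phi z = exp (s ^ 2 / 2) * phi (z - s) := by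
  simp only [phi]
  rw [mul_left_comm, ← exp_add, mul_left_comm (exp _), ← exp_add]
  ring_nf

lemma integrable_exp_mul_mul_phi (s : ℝ) : Integrable fun z => exp (s * z) * phi z := by
  simp_rw [exp_mul_mul_phi]
  exact (integrable_phi.comp_sub_right s).const_mul _

lemma integral_exp_mul_mul_phi (s : ℝ) : ∫ z, exp (s * z) * phi z = exp (s ^ 2 / 2) := by
  simp_rw [exp_mul_mul_phi]
  rw [integral_const_mul, integral_sub_right_eq_self phi s, integral_phi, mul_one]

lemma integral_Ioi_exp_mul_mul_phi (s c : ℝ) :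
    ∫ z in Ioi c, exp (s * z) * phi z = exp (s ^ 2 / 2) * Phi (s - c) := by
  simp_rw [exp_mul_mul_phi]
  rw [integral_const_mul, setIntegral_Ioi_comp_sub, integral_Ioi_phi, neg_sub]

section LogNormal

variable {S K m s : ℝ}

lemma lt_mul_exp_add_mul_iff (hS : 0 < S) (hK : 0 < K) (hs : 0 < s) (z : ℝ) :
    K < S * exp (m + s * z) ↔ -((log (S / K) + m) / s) < z := by
  rw [← div_lt_iff₀' hS, ← log_lt_iff_lt_exp (div_pos hK hS), ← neg_div, div_lt_iff₀ hs,
    ← inv_div, log_inv]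
  constructor <;> intro h <;> linarith

lemma max_mul_exp_sub_mul_phi_eq_indicator (hS : 0 < S) (hK : 0 < K) (hs : 0 < s) :
    (fun z => max (S * exp (m + s * z) - K) 0 * phi z) =
      (Ioi (-((log (S / K) + m) / s))).indicator
        fun z => S * exp m * (exp (s * z) * phi z) - K * phi z := by
  ext z
  by_cases hz : z ∈ Ioi (-((log (S / K) + m) / s))
  · have hlt := (lt_mul_exp_add_mul_iff hS hK hs z).mpr hz
    rw [indicator_of_mem hz, max_eq_left (by linarith), exp_add]
    ring
  · have hle : S * exp (m + s * z) ≤ K := not_lt.mp ((lt_mul_exp_add_mul_iff hS hK hs z).not.mpr hz)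
    rw [indicator_of_notMem hz, max_eq_right (by linarith), zero_mul]

lemma integrable_max_mul_exp_sub_mul_phi (hS : 0 < S) (hK : 0 < K) (hs : 0 < s) :
    Integrable fun z => max (S * exp (m + s * z) - K) 0 * phi z := by
  rw [max_mul_exp_sub_mul_phi_eq_indicator hS hK hs, integrable_indicator_iff measurableSet_Ioi]
  exact (((integrable_exp_mul_mul_phi s).const_mul _).sub (integrable_phi.const_mul K)).integrableOn

lemma integral_max_mul_exp_sub_mul_phi (hS : 0 < S) (hK : 0 < K) (hs : 0 < s) :
    ∫ z, max (S * exp (m + s * z) - K) 0 * phi z =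
      S * exp (m + s ^ 2 / 2) * Phi ((log (S / K) + m) / s + s) -
        K * Phi ((log (S / K) + m) / s) := by
  rw [max_mul_exp_sub_mul_phi_eq_indicator hS hK hs, integral_indicator measurableSet_Ioi,
    integral_sub (((integrable_exp_mul_mul_phi s).const_mul _).integrableOn)
      (integrable_phi.const_mul K).integrableOn,
    integral_const_mul, integral_const_mul, integral_Ioi_exp_mul_mul_phi, integral_Ioi_phi,
    neg_neg, exp_add, sub_neg_eq_add, add_comm s]
  ring

lemma mul_exp_add_mul_mul_phi (z : ℝ) :
    S * exp (m + s * z) * phi z = S * exp m * (exp (s * z) * phi z) := by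
  rw [exp_add]
  ring

lemma max_sub_eq_max_sub_add_sub (x : ℝ) : max (K - x) 0 = max (x - K) 0 + K - x := by
  rcases le_total x K with h | h
  · rw [max_eq_left (by linarith), max_eq_right (by linarith)]
    ring
  · rw [max_eq_right (by linarith), max_eq_left (by linarith)]
    ring

lemma max_sub_mul_exp_mul_phi_eq (z : ℝ) :
    max (K - S * exp (m + s * z)) 0 * phi z =
      max (S * exp (m + s * z) - K) 0 * phi z + K * phi z - S * exp m * (exp (s * z) * phi z) := by
  rw [max_sub_eq_max_sub_add_sub, ← mul_exp_add_mul_mul_phi]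
  ring

lemma integrable_max_sub_mul_exp_mul_phi (hS : 0 < S) (hK : 0 < K) (hs : 0 < s) :
    Integrable fun z => max (K - S * exp (m + s * z)) 0 * phi z := by
  simp_rw [max_sub_mul_exp_mul_phi_eq]
  exact ((integrable_max_mul_exp_sub_mul_phi hS hK hs).add (integrable_phi.const_mul K)).sub
    ((integrable_exp_mul_mul_phi s).const_mul _)

lemma integral_max_sub_mul_exp_mul_phi (hS : 0 < S) (hK : 0 < K) (hs : 0 < s) :
    ∫ z, max (K - S * exp (m + s * z)) 0 * phi z =
      S * exp (m + s ^ 2 / 2) * Phi ((log (S / K) + m) / s + s) -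
        K * Phi ((log (S / K) + m) / s) + K - S * exp (m + s ^ 2 / 2) := by
  have hcall := integrable_max_mul_exp_sub_mul_phi (m := m) hS hK hs
  have hsum : Integrable fun z => max (S * exp (m + s * z) - K) 0 * phi z + K * phi z :=
    hcall.add (integrable_phi.const_mul K)
  simp_rw [max_sub_mul_exp_mul_phi_eq]
  rw [integral_sub hsum ((integrable_exp_mul_mul_phi s).const_mul _),
    integral_add hcall (integrable_phi.const_mul K),
    integral_max_mul_exp_sub_mul_phi hS hK hs, integral_const_mul, integral_const_mul,
    integral_phi, integral_exp_mul_mul_phi, exp_add]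
  ring

end LogNormal

noncomputable def portfolioPayoff (μp μc S₀ Kp Kc α T σ z : ℝ) : ℝ :=
  μp * max (Kp - S₀ * exp (α * T - σ ^ 2 * T / 2 + σ * √T * z)) 0 +
    μc * max (S₀ * exp (α * T - σ ^ 2 * T / 2 + σ * √T * z) - Kc) 0

noncomputable def portfolioForwardValue (μp μc S₀ Kp Kc α T σ : ℝ) : ℝ :=
  exp (α * T) * (μp * putBS S₀ Kp α T σ + μc * callBS S₀ Kc α T σ)

lemma exp_mul_callBS (S₀ K α T σ : ℝ) :
    exp (α * T) * callBS S₀ K α T σ =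
      S₀ * exp (α * T) * Phi (dBS S₀ K α T σ) - K * Phi (dBS S₀ K α T σ - σ * √T) := by
  have h : exp (α * T) * exp (-(α * T)) = 1 := by rw [← exp_add, add_neg_cancel, exp_zero]
  rw [callBS]
  linear_combination (-K * Phi (dBS S₀ K α T σ - σ * √T)) * h

lemma exp_mul_putBS (S₀ K α T σ : ℝ) :
    exp (α * T) * putBS S₀ K α T σ = exp (α * T) * callBS S₀ K α T σ - S₀ * exp (α * T) + K := by
  have h : exp (α * T) * exp (-(α * T)) = 1 := by rw [← exp_add, add_neg_cancel, exp_zero]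
  rw [putBS]
  linear_combination K * h

lemma integral_portfolioPayoff_gaussianReal {μp μc S₀ Kp Kc T σ : ℝ} (hS : 0 < S₀)
    (hKp : 0 < Kp) (hKc : 0 < Kc) (hσ : 0 < σ) (hT : 0 < T) (α : ℝ) :
    ∫ z, portfolioPayoff μp μc S₀ Kp Kc α T σ z ∂gaussianReal 0 1 =
      portfolioForwardValue μp μc S₀ Kp Kc α T σ := by
  set s := σ * √T with hs_def
  set m := α * T - σ ^ 2 * T / 2 with hm_def
  have hs : 0 < s := by positivity
  have hsq : s ^ 2 = σ ^ 2 * T := by rw [hs_def, mul_pow, sq_sqrt hT.le]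
  have hm : m + s ^ 2 / 2 = α * T := by rw [hm_def, hsq]; ring
  have hd : ∀ K, (log (S₀ / K) + m) / s = dBS S₀ K α T σ - s := fun K => by
    rw [dBS, eq_sub_iff_add_eq, div_add' _ _ _ hs.ne', hs_def, div_left_inj' hs.ne']
    linear_combination hsq
  have hpoint : ∀ z, phi z * portfolioPayoff μp μc S₀ Kp Kc α T σ z =
      μp * (max (Kp - S₀ * exp (m + s * z)) 0 * phi z) +
        μc * (max (S₀ * exp (m + s * z) - Kc) 0 * phi z) := fun z => by
    rw [portfolioPayoff]
    ring
  rw [integral_gaussianReal_eq_integral_phi_mul]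
  simp_rw [hpoint]
  rw [integral_add ((integrable_max_sub_mul_exp_mul_phi hS hKp hs).const_mul μp)
      ((integrable_max_mul_exp_sub_mul_phi hS hKc hs).const_mul μc),
    integral_const_mul, integral_const_mul, integral_max_sub_mul_exp_mul_phi hS hKp hs,
    integral_max_mul_exp_sub_mul_phi hS hKc hs, hd, hd, sub_add_cancel, sub_add_cancel, hm,
    portfolioForwardValue, mul_add, ← mul_left_comm μp, ← mul_left_comm μc, exp_mul_putBS,
    exp_mul_callBS, exp_mul_callBS]
  ring

lemma hasDerivAt_dBS_rate (S₀ K T σ α : ℝ) :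
    HasDerivAt (fun r => dBS S₀ K r T σ) (T / (σ * √T)) α := by
  have h := ((((hasDerivAt_id α).add_const (σ ^ 2 / 2)).const_mul T).const_add
    (log (S₀ / K))).div_const (σ * √T)
  simpa [dBS] using h

section RateDerivative

variable {S₀ K T σ : ℝ}

lemma strictMono_dBS_rate (hσ : 0 < σ) (hT : 0 < T) : StrictMono fun r => dBS S₀ K r T σ :=
  strictMono_of_hasDerivAt_pos (hasDerivAt_dBS_rate S₀ K T σ) fun _ => by positivity

lemma mul_exp_mul_phi_dBS (hS : 0 < S₀) (hK : 0 < K) (hσ : 0 < σ) (hT : 0 < T) (α : ℝ) :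
    S₀ * exp (α * T) * phi (dBS S₀ K α T σ) = K * phi (dBS S₀ K α T σ - σ * √T) := by
  set d := dBS S₀ K α T σ with hd_def
  have hs : 0 < σ * √T := by positivity
  have hds : d * (σ * √T) = log (S₀ / K) + T * (α + σ ^ 2 / 2) := by
    rw [hd_def, dBS, div_mul_cancel₀ _ hs.ne']
  have hsq : (σ * √T) ^ 2 = σ ^ 2 * T := by rw [mul_pow, sq_sqrt hT.le]
  have hexp : exp (-(d - σ * √T) ^ 2 / 2) = S₀ / K * exp (α * T) * exp (-d ^ 2 / 2) := by
    rw [← exp_log (div_pos hS hK), ← exp_add, ← exp_add]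
    congr 1
    linear_combination hds - hsq / 2
  simp only [phi, hexp]
  field_simp

lemma hasDerivAt_exp_mul_callBS (hS : 0 < S₀) (hK : 0 < K) (hσ : 0 < σ) (hT : 0 < T) (α : ℝ) :
    HasDerivAt (fun r => exp (r * T) * callBS S₀ K r T σ)
      (T * S₀ * exp (α * T) * Phi (dBS S₀ K α T σ)) α := by
  have hd := hasDerivAt_dBS_rate S₀ K T σ α
  have hexp : HasDerivAt (fun r => exp (r * T)) (exp (α * T) * T) α := by
    simpa using ((hasDerivAt_id α).mul_const T).exp
  have h := ((hexp.const_mul S₀).mul ((hasDerivAt_Phi _).comp α hd)).sub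
    (((hasDerivAt_Phi _).comp α (hd.sub_const (σ * √T))).const_mul K)
  simp_rw [exp_mul_callBS]
  refine h.congr_deriv ?_
  simp only [Function.comp_apply]
  linear_combination (T / (σ * √T)) * mul_exp_mul_phi_dBS hS hK hσ hT α

end RateDerivative

lemma hasDerivAt_portfolioForwardValue {μp μc S₀ Kp Kc T σ : ℝ} (hS : 0 < S₀) (hKp : 0 < Kp)
    (hKc : 0 < Kc) (hσ : 0 < σ) (hT : 0 < T) (α : ℝ) :
    HasDerivAt (fun r => portfolioForwardValue μp μc S₀ Kp Kc r T σ)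
      (T * S₀ * exp (α * T) *
        (μc * Phi (dBS S₀ Kc α T σ) - μp * (1 - Phi (dBS S₀ Kp α T σ)))) α := by
  have hexp : HasDerivAt (fun r => S₀ * exp (r * T)) (S₀ * (exp (α * T) * T)) α := by
    simpa using (((hasDerivAt_id α).mul_const T).exp).const_mul S₀
  have h := ((((hasDerivAt_exp_mul_callBS hS hKp hσ hT α).sub hexp).add_const Kp).const_mul μp).add
    ((hasDerivAt_exp_mul_callBS hS hKc hσ hT α).const_mul μc)
  have hfun : (fun r => portfolioForwardValue μp μc S₀ Kp Kc r T σ) = fun r =>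
      μp * (exp (r * T) * callBS S₀ Kp r T σ - S₀ * exp (r * T) + Kp) +
        μc * (exp (r * T) * callBS S₀ Kc r T σ) := by
    ext r
    rw [portfolioForwardValue, ← exp_mul_putBS]
    ring
  rw [hfun]
  refine h.congr_deriv ?_
  ring

lemma lt_of_hasDerivAt_of_sign {f f' : ℝ → ℝ} {x₀ x : ℝ} (hf : ∀ y, HasDerivAt f (f' y) y)
    (hneg : ∀ y < x₀, f' y < 0) (hpos : ∀ y, x₀ < y → 0 < f' y) (hx : x ≠ x₀) :
    f x₀ < f x := by
  have hcont : Continuous f := continuous_iff_continuousAt.mpr fun y => (hf y).continuousAt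
  rcases hx.lt_or_gt with hlt | hgt
  · refine strictAntiOn_of_deriv_neg (convex_Icc x x₀) hcont.continuousOn (fun y hy => ?_)
      (left_mem_Icc.mpr hlt.le) (right_mem_Icc.mpr hlt.le) hlt
    rw [interior_Icc] at hy
    exact (hf y).deriv ▸ hneg y hy.2
  · refine strictMonoOn_of_deriv_pos (convex_Icc x₀ x) hcont.continuousOn (fun y hy => ?_)
      (left_mem_Icc.mpr hgt.le) (right_mem_Icc.mpr hgt.le) hgt
    rw [interior_Icc] at hy
    exact (hf y).deriv ▸ hpos y hy.1

lemma portfolioForwardValue_lt {μp μc S₀ Kp Kc r T σ : ℝ} (hS : 0 < S₀) (hKp : 0 < Kp)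
    (hKc : 0 < Kc) (hσ : 0 < σ) (hT : 0 < T) (hμp : 0 < μp) (hμc : 0 < μc)
    (hbalance : μc * Phi (dBS S₀ Kc r T σ) = μp * (1 - Phi (dBS S₀ Kp r T σ)))
    {α : ℝ} (hα : α ≠ r) :
    portfolioForwardValue μp μc S₀ Kp Kc r T σ < portfolioForwardValue μp μc S₀ Kp Kc α T σ := by
  set ψ := fun y => μc * Phi (dBS S₀ Kc y T σ) - μp * (1 - Phi (dBS S₀ Kp y T σ))
  have hψ : StrictMono ψ := fun x y hxy => by
    have hc := strictMono_Phi (strictMono_dBS_rate (S₀ := S₀) (K := Kc) hσ hT hxy)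
    have hp := strictMono_Phi (strictMono_dBS_rate (S₀ := S₀) (K := Kp) hσ hT hxy)
    simp only [ψ]
    nlinarith
  have hψr : ψ r = 0 := sub_eq_zero.mpr hbalance
  refine lt_of_hasDerivAt_of_sign (hasDerivAt_portfolioForwardValue hS hKp hKc hσ hT)
    (fun y hy => ?_) (fun y hy => ?_) hα
  · exact mul_neg_of_pos_of_neg (by positivity) (hψr ▸ hψ hy)
  · exact mul_pos (by positivity) (hψr ▸ hψ hy)

section Independence

variable {Ω α β : Type*} [MeasurableSpace Ω] [MeasurableSpace α] [MeasurableSpace β]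
  {P : Measure Ω} [IsFiniteMeasure P] {X : Ω → α} {Y : Ω → β} {F : α × β → ℝ}

lemma ProbabilityTheory.IndepFun.integrable_prod_map_map (hXY : IndepFun X Y P)
    (hX : AEMeasurable X P) (hY : AEMeasurable Y P) (hF : StronglyMeasurable F)
    (hint : Integrable (fun ω => F (X ω, Y ω)) P) :
    Integrable F ((P.map X).prod (P.map Y)) := by
  rw [← (indepFun_iff_map_prod_eq_prod_map_map hX hY).mp hXY]
  exact (integrable_map_measure hF.aestronglyMeasurable (hX.prodMk hY)).mpr hint

lemma ProbabilityTheory.IndepFun.integrable_integral_comp (hXY : IndepFun X Y P)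
    (hX : AEMeasurable X P) (hY : AEMeasurable Y P) (hF : StronglyMeasurable F)
    (hint : Integrable (fun ω => F (X ω, Y ω)) P) :
    Integrable (fun ω => ∫ y, F (X ω, y) ∂P.map Y) P := by
  have h := (hXY.integrable_prod_map_map hX hY hF hint).integral_prod_left
  exact (integrable_map_measure h.aestronglyMeasurable hX).mp h

lemma ProbabilityTheory.IndepFun.integral_comp_eq_integral_integral (hXY : IndepFun X Y P)
    (hX : AEMeasurable X P) (hY : AEMeasurable Y P) (hF : StronglyMeasurable F)
    (hint : Integrable (fun ω => F (X ω, Y ω)) P) :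
    ∫ ω, F (X ω, Y ω) ∂P = ∫ ω, ∫ y, F (X ω, y) ∂P.map Y ∂P := by
  have hFint := hXY.integrable_prod_map_map hX hY hF hint
  rw [← integral_map (hX.prodMk hY) hF.aestronglyMeasurable,
    (indepFun_iff_map_prod_eq_prod_map_map hX hY).mp hXY, integral_prod F hFint,
    integral_map hX hFint.integral_prod_left.aestronglyMeasurable]

end Independence

lemma lt_integral_comp_of_forall_ne_lt {Ω α : Type*} [MeasurableSpace Ω] {P : Measure Ω}
    [IsProbabilityMeasure P] {X : Ω → α} {g : α → ℝ} {x₀ : α} (hg : ∀ x, x ≠ x₀ → g x₀ < g x)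
    (hint : Integrable (fun ω => g (X ω)) P) (hne : 0 < P {ω | X ω ≠ x₀}) :
    g x₀ < ∫ ω, g (X ω) ∂P := by
  have hge : ∀ x, g x₀ ≤ g x := fun x => by
    rcases eq_or_ne x x₀ with rfl | hx
    exacts [le_rfl, (hg x hx).le]
  have hpos : 0 < ∫ ω, (g (X ω) - g x₀) ∂P := by
    rw [integral_pos_iff_support_of_nonneg (fun ω => sub_nonneg.mpr (hge (X ω)))
      (hint.sub (integrable_const _))]
    exact hne.trans_le (measure_mono fun ω hω => sub_ne_zero.mpr (hg (X ω) hω).ne')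
  rw [integral_sub hint (integrable_const _), integral_const, probReal_univ, one_smul] at hpos
  linarith

theorem stmt18_general {Ω : Type*} [MeasurableSpace Ω] (P : Measure Ω) [IsProbabilityMeasure P]
    (a Z : Ω → ℝ) (hZmeas : Measurable Z) (hameas : Measurable a)
    (hZ : Measure.map Z P = gaussianReal 0 1) (hindep : IndepFun a Z P)
    (S₀ Kp Kc σ T r μp μc : ℝ) (hS : 0 < S₀) (hKp : 0 < Kp) (hKc : 0 < Kc)
    (hσ : 0 < σ) (hT : 0 < T) (hμp : 0 < μp) (hμc : 0 < μc)
    (hne : 0 < P {ω | a ω ≠ r})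
    (hratio : μc / μp = (1 - Phi (dBS S₀ Kp r T σ)) / Phi (dBS S₀ Kc r T σ))
    (hint : Integrable (fun ω =>
      μp * max (Kp - S₀ * Real.exp (a ω * T - σ ^ 2 * T / 2 + σ * Real.sqrt T * Z ω)) 0 +
      μc * max (S₀ * Real.exp (a ω * T - σ ^ 2 * T / 2 + σ * Real.sqrt T * Z ω) - Kc) 0) P) :
    (∫ ω, (μp * max (Kp - S₀ * Real.exp (a ω * T - σ ^ 2 * T / 2 + σ * Real.sqrt T * Z ω)) 0 +
           μc * max (S₀ * Real.exp (a ω * T - σ ^ 2 * T / 2 + σ * Real.sqrt T * Z ω) - Kc) 0)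
        ∂P) >
      Real.exp (r * T) * (μp * putBS S₀ Kp r T σ + μc * callBS S₀ Kc r T σ) := by
  set F : ℝ × ℝ → ℝ := fun q => portfolioPayoff μp μc S₀ Kp Kc q.1 T σ q.2
  have hF : StronglyMeasurable F := by
    refine Continuous.stronglyMeasurable ?_
    simp only [F, portfolioPayoff]
    fun_prop
  have hint' : Integrable (fun ω => F (a ω, Z ω)) P := hint
  have hcond : ∀ x, ∫ z, F (x, z) ∂P.map Z = portfolioForwardValue μp μc S₀ Kp Kc x T σ :=
    fun x => hZ ▸ integral_portfolioPayoff_gaussianReal hS hKp hKc hσ hT x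
  have hbalance : μc * Phi (dBS S₀ Kc r T σ) = μp * (1 - Phi (dBS S₀ Kp r T σ)) := by
    rw [div_eq_div_iff hμp.ne' (Phi_pos _).ne'] at hratio
    linarith
  change portfolioForwardValue μp μc S₀ Kp Kc r T σ < ∫ ω, F (a ω, Z ω) ∂P
  rw [hindep.integral_comp_eq_integral_integral hameas.aemeasurable hZmeas.aemeasurable hF hint']
  simp_rw [hcond]
  refine lt_integral_comp_of_forall_ne_lt (g := (portfolioForwardValue μp μc S₀ Kp Kc · T σ))
    (fun x hx => ?_) ?_ hne
  · exact portfolioForwardValue_lt hS hKp hKc hσ hT hμp hμc hbalance hx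
  · simpa only [hcond] using
      hindep.integrable_integral_comp hameas.aemeasurable hZmeas.aemeasurable hF hint'

theorem stmt18 {Ω : Type*} [MeasurableSpace Ω] (P : Measure Ω) [IsProbabilityMeasure P]
    (a Z : Ω → ℝ) (hZmeas : Measurable Z) (hameas : Measurable a)
    (hZ : Measure.map Z P = gaussianReal 0 1) (hindep : IndepFun a Z P)
    (S₀ Kp Kc σ T r μp μc : ℝ) (hS : 0 < S₀) (hKp : 0 < Kp) (hKc : 0 < Kc)
    (hσ : 0 < σ) (hT : 0 < T) (hr : 0 ≤ r) (hμp : 0 < μp) (hμc : 0 < μc)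
    (hne : 0 < P {ω | a ω ≠ r})
    (hratio : μc / μp = (1 - Phi (dBS S₀ Kp r T σ)) / Phi (dBS S₀ Kc r T σ))
    (hint : Integrable (fun ω =>
      μp * max (Kp - S₀ * Real.exp (a ω * T - σ ^ 2 * T / 2 + σ * Real.sqrt T * Z ω)) 0 +
      μc * max (S₀ * Real.exp (a ω * T - σ ^ 2 * T / 2 + σ * Real.sqrt T * Z ω) - Kc) 0) P) :
    (∫ ω, (μp * max (Kp - S₀ * Real.exp (a ω * T - σ ^ 2 * T / 2 + σ * Real.sqrt T * Z ω)) 0 +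
           μc * max (S₀ * Real.exp (a ω * T - σ ^ 2 * T / 2 + σ * Real.sqrt T * Z ω) - Kc) 0)
        ∂P) >
      Real.exp (r * T) * (μp * putBS S₀ Kp r T σ + μc * callBS S₀ Kc r T σ) :=
  stmt18_general P a Z hZmeas hameas hZ hindep S₀ Kp Kc σ T r μp μc hS hKp hKc hσ hT hμp hμc hne
    hratio hint
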